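/- Let {S_j}_{j=1}^N be an IFS of contractive similitudes on ℝ^d with symbolic tree (X, 𝓔_v) and slanted edge set 𝓔_s. Then the graph (X, 𝓔_v ∪ 𝓔_s) is a diamond graph: (i) every edge joins vertices whose levels differ by exactly 1; (ii) if p(x, y, z) is a path with x ≠ z and |x| = |z| = |y| − 1, then there exists y' ∈ X with |y'| = |x| − 1 such that p(x, y', z) is also a path (one may take y' = y⁻²). -/

import Mathlib

open Metric Filter

namespace HypIFS

/-- Euclidean space `ℝ^d`. -/
abbrev Euc (d : ℕ) := EuclideanSpace ℝ (Fin d)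

/-- The distance `dist(A, B)` between two subsets of a metric space. -/
noncomputable def setDist {E : Type*} [PseudoMetricSpace E] (A B : Set E) : ℝ :=
  sInf (Set.image2 dist A B)

variable {d N : ℕ}

/-- For a word `x = i₁⋯i_k`, the composition `S_x = S_{i₁} ∘ ⋯ ∘ S_{i_k}`. -/
def sWord (S : Fin N → Euc d → Euc d) : List (Fin N) → Euc d → Euc d :=
  fun w => w.foldr (fun i f => S i ∘ f) id

/-- For a word `x = i₁⋯i_k`, the product `r_x = r_{i₁} ⋯ r_{i_k}` of contraction ratios. -/
def rWord (ρ : Fin N → ℝ) (w : List (Fin N)) : ℝ := (w.map ρ).prod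

/-- The coding level `𝓙_n = {i₁⋯i_k : r_{i₁⋯i_k} ≤ rⁿ < r_{i₁⋯i_{k−1}}}`,
with `𝓙_0` consisting of the empty word. -/
def Jlevel (ρ : Fin N → ℝ) (r : ℝ) (n : ℕ) : Set (List (Fin N)) :=
  if n = 0 then {([] : List (Fin N))}
  else {w | rWord ρ w ≤ r ^ n ∧ r ^ n < rWord ρ w.dropLast}

/-- The vertical (parent–child) edge relation: `x ∈ 𝓙_n` is the initial segment
of `y ∈ 𝓙_{n+1}`. -/
def EV (ρ : Fin N → ℝ) (r : ℝ) (x y : List (Fin N)) : Prop :=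
  ∃ n : ℕ, x ∈ Jlevel ρ r n ∧ y ∈ Jlevel ρ r (n + 1) ∧ x <+: y

/-- The horizontal edge relation: `x ≠ y` in the same level `𝓙_n` with
`dist(K_x, K_y) ≤ κ rⁿ`. -/
def EH (S : Fin N → Euc d → Euc d) (ρ : Fin N → ℝ) (r κ : ℝ) (K : Set (Euc d))
    (x y : List (Fin N)) : Prop :=
  ∃ n : ℕ, x ∈ Jlevel ρ r n ∧ y ∈ Jlevel ρ r n ∧ x ≠ y ∧
    setDist (sWord S x '' K) (sWord S y '' K) ≤ κ * r ^ n

/-- The augmented tree `(X, 𝓔)`, `𝓔 = 𝓔_v ∪ 𝓔_h`, as a graph on the word space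
(words belonging to no level `𝓙_n` are isolated vertices). -/
def augIFS (S : Fin N → Euc d → Euc d) (ρ : Fin N → ℝ) (r κ : ℝ) (K : Set (Euc d)) :
    SimpleGraph (List (Fin N)) where
  Adj x y := (EV ρ r x y ∨ EV ρ r y x ∨ EH S ρ r κ K x y ∨ EH S ρ r κ K y x) ∧ x ≠ y
  symm := by
    constructor
    rintro x y ⟨h1 | h2 | h3 | h4, hne⟩
    · exact ⟨Or.inr (Or.inl h1), hne.symm⟩
    · exact ⟨Or.inl h2, hne.symm⟩
    · exact ⟨Or.inr (Or.inr (Or.inr h3)), hne.symm⟩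
    · exact ⟨Or.inr (Or.inr (Or.inl h4)), hne.symm⟩
  loopless := ⟨fun x h => h.2 rfl⟩

/-- A graph is of bounded degree if `sup_x deg(x) < ∞`. -/
def BddDeg {V : Type*} (G : SimpleGraph V) : Prop :=
  ∃ M : ℕ, ∀ x : V, {y | G.Adj x y}.Finite ∧ {y | G.Adj x y}.ncard ≤ M

/-- The slanted edge set `𝓔_s`: levels differ by one, not a vertical edge, and
`dist(K_x, K_y) ≤ κ r^{min(|x|,|y|)}`. -/
def ES (S : Fin N → Euc d → Euc d) (ρ : Fin N → ℝ) (r κ : ℝ) (K : Set (Euc d))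
    (x y : List (Fin N)) : Prop :=
  ∃ n : ℕ, ((x ∈ Jlevel ρ r n ∧ y ∈ Jlevel ρ r (n + 1)) ∨
            (y ∈ Jlevel ρ r n ∧ x ∈ Jlevel ρ r (n + 1))) ∧
    ¬ EV ρ r x y ∧ ¬ EV ρ r y x ∧
    setDist (sWord S x '' K) (sWord S y '' K) ≤ κ * r ^ n

/-- The graph `(X, 𝓔_v ∪ 𝓔_s)` with slanted edges. -/
def slantIFS (S : Fin N → Euc d → Euc d) (ρ : Fin N → ℝ) (r κ : ℝ) (K : Set (Euc d)) :
    SimpleGraph (List (Fin N)) where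
  Adj x y := (EV ρ r x y ∨ EV ρ r y x ∨ ES S ρ r κ K x y ∨ ES S ρ r κ K y x) ∧ x ≠ y
  symm := by
    constructor
    rintro x y ⟨h1 | h2 | h3 | h4, hne⟩
    · exact ⟨Or.inr (Or.inl h1), hne.symm⟩
    · exact ⟨Or.inl h2, hne.symm⟩
    · exact ⟨Or.inr (Or.inr (Or.inr h3)), hne.symm⟩
    · exact ⟨Or.inr (Or.inr (Or.inl h4)), hne.symm⟩
  loopless := ⟨fun x h => h.2 rfl⟩

/-!
Levels are told apart by `r^{n+1} < r_w ≤ rⁿ` on `𝓙_n`. A vertex `y ∈ 𝓙_{n+1}` adjacent to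
`x ∈ 𝓙_n` either extends `x` or satisfies `dist(K_x, K_y) ≤ κ rⁿ`. Its grandparent
`y' = y⁻² ∈ 𝓙_{n-1}` is then close to `x`: in the first case `K_x` and `K_{y'}` are nested, in
the second `K_y ⊆ K_{y'}` gives `dist(K_x, K_{y'}) ≤ κ rⁿ ≤ κ r^{n-1}`. Two vertices in
consecutive levels that are this close are joined by a vertical or a slanted edge.
-/

section setDist

variable {E : Type*} [PseudoMetricSpace E] {A B B' : Set E}

lemma setDist_comm (A B : Set E) : setDist A B = setDist B A := by
  unfold setDist
  rw [Set.image2_swap]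
  simp only [dist_comm]

lemma bddBelow_image2_dist (A B : Set E) : BddBelow (Set.image2 dist A B) :=
  ⟨0, by rintro _ ⟨a, -, b, -, rfl⟩; exact dist_nonneg⟩

lemma setDist_le_setDist_of_subset_right (hB : B' ⊆ B) (hA : A.Nonempty) (hB' : B'.Nonempty) :
    setDist A B ≤ setDist A B' :=
  csInf_le_csInf (bddBelow_image2_dist A B) (hA.image2 hB') (Set.image2_subset_left hB)

lemma setDist_nonpos_of_inter_nonempty (h : (A ∩ B).Nonempty) : setDist A B ≤ 0 := by
  obtain ⟨p, hpA, hpB⟩ := h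
  exact csInf_le (bddBelow_image2_dist A B) ⟨p, hpA, p, hpB, dist_self p⟩

end setDist

section Words

lemma sWord_append (S : Fin N → Euc d → Euc d) (a b : List (Fin N)) :
    sWord S (a ++ b) = sWord S a ∘ sWord S b := by
  induction a with
  | nil => rfl
  | cons i a ih => exact congrArg (S i ∘ ·) ih

lemma sWord_image_subset {S : Fin N → Euc d → Euc d} {K : Set (Euc d)}
    (hK : ∀ j, S j '' K ⊆ K) (w : List (Fin N)) : sWord S w '' K ⊆ K := by
  induction w with
  | nil => simp [sWord]
  | cons i w ih =>
    rw [show sWord S (i :: w) = S i ∘ sWord S w from rfl, Set.image_comp]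
    exact (Set.image_mono ih).trans (hK i)

lemma sWord_image_subset_of_prefix {S : Fin N → Euc d → Euc d} {K : Set (Euc d)}
    (hK : ∀ j, S j '' K ⊆ K) {w w' : List (Fin N)} (h : w <+: w') :
    sWord S w' '' K ⊆ sWord S w '' K := by
  obtain ⟨t, rfl⟩ := h
  rw [sWord_append, Set.image_comp]
  exact Set.image_mono (sWord_image_subset hK t)

lemma setDist_sWord_image_nonpos_of_prefix {S : Fin N → Euc d → Euc d} {K : Set (Euc d)}
    (hK : ∀ j, S j '' K ⊆ K) (hKne : K.Nonempty) {w w' : List (Fin N)}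
    (h : w <+: w' ∨ w' <+: w) : setDist (sWord S w '' K) (sWord S w' '' K) ≤ 0 := by
  apply setDist_nonpos_of_inter_nonempty
  rcases h with h | h
  · rw [Set.inter_eq_right.2 (sWord_image_subset_of_prefix hK h)]
    exact hKne.image _
  · rw [Set.inter_eq_left.2 (sWord_image_subset_of_prefix hK h)]
    exact hKne.image _

@[simp]
lemma rWord_nil (ρ : Fin N → ℝ) : rWord ρ [] = 1 := rfl

lemma rWord_append (ρ : Fin N → ℝ) (a b : List (Fin N)) :
    rWord ρ (a ++ b) = rWord ρ a * rWord ρ b := by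
  simp [rWord]

lemma rWord_nonneg {ρ : Fin N → ℝ} (hρ : ∀ j, 0 ≤ ρ j) (w : List (Fin N)) : 0 ≤ rWord ρ w :=
  List.prod_nonneg (by simpa using fun j _ => hρ j)

end Words

section Levels

variable {ρ : Fin N → ℝ} {r : ℝ}

lemma mem_Jlevel_zero {w : List (Fin N)} : w ∈ Jlevel ρ r 0 ↔ w = [] := by
  simp [Jlevel]

lemma mem_Jlevel_iff_of_ne_zero {n : ℕ} (hn : n ≠ 0) {w : List (Fin N)} :
    w ∈ Jlevel ρ r n ↔ rWord ρ w ≤ r ^ n ∧ r ^ n < rWord ρ w.dropLast := by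
  simp [Jlevel, hn]

lemma rWord_le_pow_of_mem_Jlevel {n : ℕ} {w : List (Fin N)} (hw : w ∈ Jlevel ρ r n) :
    rWord ρ w ≤ r ^ n := by
  rcases eq_or_ne n 0 with rfl | hn
  · simp [mem_Jlevel_zero.1 hw]
  · exact ((mem_Jlevel_iff_of_ne_zero hn).1 hw).1

lemma pow_succ_lt_rWord_of_mem_Jlevel (hr0 : 0 < r) (hr1 : r < 1) (hrρ : ∀ j, r ≤ ρ j)
    {n : ℕ} {w : List (Fin N)} (hw : w ∈ Jlevel ρ r n) : r ^ (n + 1) < rWord ρ w := by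
  rcases eq_or_ne n 0 with rfl | hn
  · simpa [mem_Jlevel_zero.1 hw] using hr1
  obtain ⟨hle, hlt⟩ := (mem_Jlevel_iff_of_ne_zero hn).1 hw
  have hw_ne : w ≠ [] := by
    rintro rfl
    simp only [rWord_nil] at hle
    linarith [pow_lt_one₀ hr0.le hr1 hn]
  calc r ^ (n + 1) = r ^ n * r := pow_succ r n
    _ < rWord ρ w.dropLast * r := mul_lt_mul_of_pos_right hlt hr0
    _ ≤ rWord ρ w.dropLast * ρ (w.getLast hw_ne) :=
      mul_le_mul_of_nonneg_left (hrρ _) (rWord_nonneg (fun j => hr0.le.trans (hrρ j)) _)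
    _ = rWord ρ w := by
      conv_rhs => rw [← List.dropLast_append_getLast hw_ne, rWord_append]
      simp [rWord]

lemma Jlevel_eq_of_mem (hr0 : 0 < r) (hr1 : r < 1) (hrρ : ∀ j, r ≤ ρ j)
    {m n : ℕ} {w : List (Fin N)} (hm : w ∈ Jlevel ρ r m) (hn : w ∈ Jlevel ρ r n) : m = n := by
  by_contra hne
  wlog hlt : m < n generalizing m n
  · exact this hn hm (Ne.symm hne) (by omega)
  have : r ^ n ≤ r ^ (m + 1) := pow_le_pow_of_le_one hr0.le hr1.le hlt
  linarith [rWord_le_pow_of_mem_Jlevel hn, pow_succ_lt_rWord_of_mem_Jlevel hr0 hr1 hrρ hm]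

/-- The ancestor is `y.take k` for the least `k` with `r_{y.take k} ≤ rᵐ`. -/
lemma exists_prefix_mem_Jlevel (hr0 : 0 ≤ r) (hr1 : r < 1) {m : ℕ} {y : List (Fin N)}
    (hy : rWord ρ y ≤ r ^ m) : ∃ w, w <+: y ∧ w ∈ Jlevel ρ r m := by
  classical
  rcases eq_or_ne m 0 with rfl | hm
  · exact ⟨[], List.nil_prefix, mem_Jlevel_zero.2 rfl⟩
  have hex : ∃ k, rWord ρ (y.take k) ≤ r ^ m := ⟨y.length, by simpa using hy⟩
  have hk0 : Nat.find hex ≠ 0 := by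
    intro h
    have h0 := Nat.find_spec hex
    rw [h, List.take_zero, rWord_nil] at h0
    linarith [pow_lt_one₀ hr0 hr1 hm]
  refine ⟨y.take (Nat.find hex), List.take_prefix _ _,
    (mem_Jlevel_iff_of_ne_zero hm).2 ⟨Nat.find_spec hex, ?_⟩⟩
  have hdrop : (y.take (Nat.find hex)).dropLast = y.take (Nat.find hex - 1) := by
    rw [List.dropLast_eq_take, List.length_take, List.take_take]
    congr 1
    have : Nat.find hex ≤ y.length := Nat.find_min' hex (by simpa using hy)
    omega
  rw [hdrop]
  exact lt_of_not_ge (Nat.find_min hex (by omega))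

end Levels

section SlantedGraph

variable {S : Fin N → Euc d → Euc d} {ρ : Fin N → ℝ} {r κ : ℝ} {K : Set (Euc d)}

lemma slantIFS_adj_levels {x y : List (Fin N)} (h : (slantIFS S ρ r κ K).Adj x y) :
    ∃ n : ℕ, (x ∈ Jlevel ρ r n ∧ y ∈ Jlevel ρ r (n + 1)) ∨
      (y ∈ Jlevel ρ r n ∧ x ∈ Jlevel ρ r (n + 1)) := by
  obtain ⟨⟨n, hx, hy, -⟩ | ⟨n, hy, hx, -⟩ | ⟨n, hn, -⟩ | ⟨n, hn, -⟩, -⟩ := h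
  · exact ⟨n, .inl ⟨hx, hy⟩⟩
  · exact ⟨n, .inr ⟨hy, hx⟩⟩
  · exact ⟨n, hn⟩
  · exact ⟨n, hn.symm⟩

lemma slantIFS_adj_of_setDist_le (hr0 : 0 < r) (hr1 : r < 1) (hrρ : ∀ j, r ≤ ρ j)
    {m : ℕ} {x y : List (Fin N)} (hx : x ∈ Jlevel ρ r m) (hy : y ∈ Jlevel ρ r (m + 1))
    (hd : setDist (sWord S x '' K) (sWord S y '' K) ≤ κ * r ^ m) :
    (slantIFS S ρ r κ K).Adj x y := by
  have hlevel := @Jlevel_eq_of_mem N ρ r hr0 hr1 hrρ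
  have hne : x ≠ y := by
    rintro rfl
    exact absurd (hlevel hx hy) (by omega)
  by_cases hpre : x <+: y
  · exact ⟨.inl ⟨m, hx, hy, hpre⟩, hne⟩
  refine ⟨.inr (.inr (.inl ⟨m, .inl ⟨hx, hy⟩, ?_, ?_, hd⟩)), hne⟩
  · exact fun ⟨_, _, _, h⟩ => hpre h
  · rintro ⟨m', hy', hx', -⟩
    have := hlevel hx hx'
    have := hlevel hy hy'
    omega

lemma prefix_or_setDist_le_of_slantIFS_adj (hr0 : 0 < r) (hr1 : r < 1) (hrρ : ∀ j, r ≤ ρ j)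
    {n : ℕ} {x y : List (Fin N)} (h : (slantIFS S ρ r κ K).Adj x y)
    (hx : x ∈ Jlevel ρ r n) (hy : y ∈ Jlevel ρ r (n + 1)) :
    x <+: y ∨ setDist (sWord S x '' K) (sWord S y '' K) ≤ κ * r ^ n := by
  have hlevel := @Jlevel_eq_of_mem N ρ r hr0 hr1 hrρ
  obtain ⟨⟨-, -, -, hp⟩ | ⟨m, hy', hx', -⟩ | ⟨m, hm, -, -, hd⟩ | ⟨m, hm, -, -, hd⟩, -⟩ := h
  · exact .inl hp
  · have := hlevel hx hx'
    have := hlevel hy hy'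
    omega
  · rcases hm with ⟨hx', -⟩ | ⟨hy', hx'⟩
    · exact .inr (hlevel hx hx' ▸ hd)
    · have := hlevel hx hx'
      have := hlevel hy hy'
      omega
  · rcases hm with ⟨hy', hx'⟩ | ⟨hx', -⟩
    · have := hlevel hx hx'
      have := hlevel hy hy'
      omega
    · exact .inr (hlevel hx hx' ▸ setDist_comm (sWord S x '' K) _ ▸ hd)

lemma slantIFS_adj_of_prefix_of_adj (hr0 : 0 < r) (hr1 : r < 1) (hrρ : ∀ j, r ≤ ρ j)
    (hκ : 0 ≤ κ) (hK : ∀ j, S j '' K ⊆ K) (hKne : K.Nonempty) {m : ℕ}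
    {x y y' : List (Fin N)} (hy'y : y' <+: y) (hy' : y' ∈ Jlevel ρ r m)
    (hx : x ∈ Jlevel ρ r (m + 1)) (hy : y ∈ Jlevel ρ r (m + 2))
    (hxy : (slantIFS S ρ r κ K).Adj x y) : (slantIFS S ρ r κ K).Adj y' x := by
  refine slantIFS_adj_of_setDist_le hr0 hr1 hrρ hy' hx ?_
  rcases prefix_or_setDist_le_of_slantIFS_adj hr0 hr1 hrρ hxy hx hy with hxy' | hd
  · exact (setDist_sWord_image_nonpos_of_prefix hK hKne
      (List.prefix_or_prefix_of_prefix hy'y hxy')).trans (by positivity)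
  · calc setDist (sWord S y' '' K) (sWord S x '' K)
        = setDist (sWord S x '' K) (sWord S y' '' K) := setDist_comm _ _
      _ ≤ setDist (sWord S x '' K) (sWord S y '' K) :=
        setDist_le_setDist_of_subset_right (sWord_image_subset_of_prefix hK hy'y)
          (hKne.image _) (hKne.image _)
      _ ≤ κ * r ^ (m + 1) := hd
      _ ≤ κ * r ^ m :=
        mul_le_mul_of_nonneg_left (pow_le_pow_of_le_one hr0.le hr1.le (by omega)) hκ

end SlantedGraph

theorem slanted_graph_is_diamond_general {d N : ℕ}
    (S : Fin N → Euc d → Euc d) (ρ : Fin N → ℝ) (r κ : ℝ) (K : Set (Euc d))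
    (hρ0 : ∀ j, 0 < ρ j) (hρ1 : ∀ j, ρ j < 1)
    (hr : IsLeast (Set.range ρ) r) (hκ : 0 < κ)
    (hKne : K.Nonempty) (hKinv : K = ⋃ j, S j '' K) :
    (∀ x y : List (Fin N), (slantIFS S ρ r κ K).Adj x y →
      ∃ n : ℕ, (x ∈ Jlevel ρ r n ∧ y ∈ Jlevel ρ r (n + 1)) ∨
               (y ∈ Jlevel ρ r n ∧ x ∈ Jlevel ρ r (n + 1))) ∧
    (∀ (x y z : List (Fin N)) (n : ℕ),
      (slantIFS S ρ r κ K).Adj x y → (slantIFS S ρ r κ K).Adj y z → x ≠ z →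
      x ∈ Jlevel ρ r n → z ∈ Jlevel ρ r n → y ∈ Jlevel ρ r (n + 1) →
      ∃ y' : List (Fin N), y' ∈ Jlevel ρ r (n - 1) ∧
        (slantIFS S ρ r κ K).Adj x y' ∧ (slantIFS S ρ r κ K).Adj y' z) := by
  obtain ⟨⟨j₀, rfl⟩, hρ_ge⟩ := hr
  have hr0 := hρ0 j₀
  have hr1 := hρ1 j₀
  have hrρ : ∀ j, ρ j₀ ≤ ρ j := fun j => hρ_ge ⟨j, rfl⟩
  have hK : ∀ j, S j '' K ⊆ K := fun j =>
    (Set.subset_iUnion (fun i => S i '' K) j).trans hKinv.superset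
  refine ⟨fun x y => slantIFS_adj_levels, fun x y z n hxy hyz hxz hx hz hy => ?_⟩
  obtain ⟨m, rfl⟩ : ∃ m, n = m + 1 := by
    refine Nat.exists_eq_succ_of_ne_zero fun hn => hxz ?_
    subst hn
    rw [mem_Jlevel_zero.1 hx, mem_Jlevel_zero.1 hz]
  obtain ⟨y', hy'y, hy'⟩ := exists_prefix_mem_Jlevel (m := m) hr0.le hr1
    ((rWord_le_pow_of_mem_Jlevel hy).trans (pow_le_pow_of_le_one hr0.le hr1.le (by omega)))
  refine ⟨y', hy', ?_, ?_⟩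
  · exact (slantIFS_adj_of_prefix_of_adj hr0 hr1 hrρ hκ.le hK hKne hy'y hy' hx hy hxy).symm
  · exact slantIFS_adj_of_prefix_of_adj hr0 hr1 hrρ hκ.le hK hKne hy'y hy' hz hy hyz.symm

/-- The graph `(X, 𝓔_v ∪ 𝓔_s)` with slanted edges is a diamond graph:
(i) every edge joins vertices in consecutive levels; (ii) if `x – y – z` is a
path with `x ≠ z` and `|x| = |z| = |y| − 1`, there is `y'` with `|y'| = |x| − 1`
such that `x – y' – z` is a path. -/
theorem slanted_graph_is_diamond {d N : ℕ} (hN : 2 ≤ N)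
    (S : Fin N → Euc d → Euc d) (ρ : Fin N → ℝ) (r κ : ℝ) (K : Set (Euc d))
    (hρ0 : ∀ j, 0 < ρ j) (hρ1 : ∀ j, ρ j < 1)
    (hsim : ∀ j a b, dist (S j a) (S j b) = ρ j * dist a b)
    (hr : IsLeast (Set.range ρ) r) (hκ : 0 < κ)
    (hKc : IsCompact K) (hKne : K.Nonempty) (hKinv : K = ⋃ j, S j '' K) :
    (∀ x y : List (Fin N), (slantIFS S ρ r κ K).Adj x y →
      ∃ n : ℕ, (x ∈ Jlevel ρ r n ∧ y ∈ Jlevel ρ r (n + 1)) ∨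
               (y ∈ Jlevel ρ r n ∧ x ∈ Jlevel ρ r (n + 1))) ∧
    (∀ (x y z : List (Fin N)) (n : ℕ),
      (slantIFS S ρ r κ K).Adj x y → (slantIFS S ρ r κ K).Adj y z → x ≠ z →
      x ∈ Jlevel ρ r n → z ∈ Jlevel ρ r n → y ∈ Jlevel ρ r (n + 1) →
      ∃ y' : List (Fin N), y' ∈ Jlevel ρ r (n - 1) ∧
        (slantIFS S ρ r κ K).Adj x y' ∧ (slantIFS S ρ r κ K).Adj y' z) :=
  slanted_graph_is_diamond_general S ρ r κ K hρ0 hρ1 hr hκ hKne hKinv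

end HypIFS
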